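/- arXiv:2105.06776 — 3 statements merged into one kernel-verified Lean document; each statement's English description precedes it below -/
import Mathlib

section
/- Let F be the middle-third Cantor set and s = log 2 / log 3. For 3^n ≤ q < 3^{n+1}, let P(q) be the set of endpoints of the basic intervals of the n-th construction level E_n of the Cantor set. Then for every t ≥ 1 and every τ > s/t, the τ-dimensional Hausdorff measure of F_t is finite; in particular dim_H F_t ≤ s/t. -/
open Metric MeasureTheory
open scoped ENNReal NNReal

/-- The left endpoints of the basic intervals of level `n` of the middle-third Cantor set. -/
def cantorLeftEnds : ℕ → Set ℝ
  | 0 => {0}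
  | n + 1 => (· / 3) '' cantorLeftEnds n ∪ (fun x ↦ (2 + x) / 3) '' cantorLeftEnds n

/-- The endpoints of the basic intervals of level `n`. -/
def cantorEndpoints (n : ℕ) : Set ℝ :=
  cantorLeftEnds n ∪ (fun x => x + (3 : ℝ) ^ (-(n : ℤ))) '' cantorLeftEnds n

/-- For `3^n ≤ q < 3^(n+1)` (i.e. `n = Nat.log 3 q`), the endpoints of the level-`n`
basic intervals. -/
def cantorP (q : ℕ) : Set ℝ := cantorEndpoints (Nat.log 3 q)

/-- Points of the Cantor set infinitely often `q^{-t}`-approximated by endpoints. -/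
def cantorFt (t : ℝ) : Set ℝ :=
  {x ∈ cantorSet | ∀ N : ℕ, ∃ q > N, ∃ p ∈ cantorP q, dist p x ≤ (q : ℝ) ^ (-t)}

lemma cantorLeftEnds_enum (n : ℕ) :
    ∃ f : ℕ → ℝ, ∀ p ∈ cantorLeftEnds n, ∃ k < 2 ^ n, f k = p := by
  induction n with
  | zero => exact ⟨fun _ => 0, by simp [cantorLeftEnds]⟩
  | succ n ih =>
    obtain ⟨f, hf⟩ := ih
    refine ⟨fun k => if k < 2 ^ n then f k / 3 else (2 + f (k - 2 ^ n)) / 3, ?_⟩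
    intro p hp
    rcases hp with ⟨x, hx, rfl⟩ | ⟨x, hx, rfl⟩
    · obtain ⟨k, hk, hfk⟩ := hf x hx
      exact ⟨k, by calc k < 2 ^ n := hk
                      _ ≤ 2 ^ (n + 1) := Nat.pow_le_pow_right (by norm_num) (by omega),
        by simp [hk, hfk]⟩
    · obtain ⟨k, hk, hfk⟩ := hf x hx
      refine ⟨k + 2 ^ n, by rw [pow_succ]; omega, ?_⟩
      have h1 : ¬ (k + 2 ^ n < 2 ^ n) := by omega
      simp [h1, hfk]

/-- An enumeration of the endpoints of level `n`. -/
noncomputable def endEnum (n : ℕ) : ℕ → ℝ := fun k =>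
  if k < 2 ^ n then (cantorLeftEnds_enum n).choose k
  else (cantorLeftEnds_enum n).choose (k - 2 ^ n) + (3 : ℝ) ^ (-(n : ℤ))

lemma endEnum_spec (n : ℕ) : ∀ p ∈ cantorEndpoints n, ∃ k < 2 ^ (n + 1), endEnum n k = p := by
  intro p hp
  have hf := (cantorLeftEnds_enum n).choose_spec
  rcases hp with hp | ⟨x, hx, rfl⟩
  · obtain ⟨k, hk, hfk⟩ := hf p hp
    exact ⟨k, by calc k < 2 ^ n := hk
                    _ ≤ 2 ^ (n + 1) := Nat.pow_le_pow_right (by norm_num) (by omega),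
      by simp [endEnum, hk, hfk]⟩
  · obtain ⟨k, hk, hfk⟩ := hf x hx
    refine ⟨k + 2 ^ n, by rw [pow_succ]; omega, ?_⟩
    have h1 : ¬ (k + 2 ^ n < 2 ^ n) := by omega
    simp [endEnum, h1, hfk]

lemma cantorFt_hausdorff_zero (t τ : ℝ) (ht : 1 ≤ t)
    (hτ : Real.log 2 / Real.log 3 / t < τ) : μH[τ] (cantorFt t) = 0 := by
  have ht0 : (0 : ℝ) < t := lt_of_lt_of_le one_pos ht
  have hs0 : 0 < Real.log 2 / Real.log 3 :=
    div_pos (Real.log_pos (by norm_num)) (Real.log_pos (by norm_num))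
  have hτ0 : 0 < τ := lt_trans (div_pos hs0 ht0) hτ
  have hst : Real.log 2 / Real.log 3 < t * τ := by
    rw [div_lt_iff₀ ht0] at hτ; linarith [hτ]
  set y : ℝ := 2 * (3 : ℝ) ^ (-(t * τ)) with hy
  have h32 : (3 : ℝ) ^ (Real.log 2 / Real.log 3) = 2 := by
    rw [show Real.log 2 / Real.log 3 = Real.logb 3 2 from rfl]
    exact Real.rpow_logb (by norm_num) (by norm_num) (by norm_num)
  have h2lt : (2 : ℝ) < (3 : ℝ) ^ (t * τ) := by
    rw [← h32]; exact Real.rpow_lt_rpow_of_exponent_lt (by norm_num) hst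
  have hy0 : 0 ≤ y := by positivity
  have hy1 : y < 1 := by
    have : y = 2 / (3 : ℝ) ^ (t * τ) := by
      rw [hy, Real.rpow_neg (by norm_num), div_eq_mul_inv]
    rw [this, div_lt_one (by positivity)]
    exact h2lt
  -- radii
  set R : ℕ → ℝ := fun n => ((3 : ℝ) ^ n) ^ (-t) with hR
  have hR0 : ∀ n, 0 < R n := fun n => by positivity
  have hRmono : ∀ m n : ℕ, m ≤ n → R n ≤ R m := fun m n h =>
    Real.rpow_le_rpow_of_nonpos (by positivity)
      (pow_le_pow_right₀ (by norm_num) h) (by linarith)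
  have hRgeom : ∀ n : ℕ, R n = ((3 : ℝ) ^ (-t)) ^ n := by
    intro n
    show ((3 : ℝ) ^ n) ^ (-t) = ((3 : ℝ) ^ (-t)) ^ n
    rw [ ← Real.rpow_natCast (3 : ℝ) n, ← Real.rpow_natCast ((3 : ℝ) ^ (-t)) n,
      ← Real.rpow_mul (by norm_num), ← Real.rpow_mul (by norm_num)]
    ring_nf
  have halg : ∀ n : ℕ, (2 : ℝ) ^ (n + 1) * (2 * R n) ^ τ = (2 * 2 ^ τ) * y ^ n := by
    intro n
    have h1 : (2 * R n) ^ τ = 2 ^ τ * (R n) ^ τ :=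
      Real.mul_rpow (by norm_num) (hR0 n).le
    have h2 : (R n) ^ τ = ((3 : ℝ) ^ (-(t * τ))) ^ n := by
      show (((3 : ℝ) ^ n) ^ (-t)) ^ τ = ((3 : ℝ) ^ (-(t * τ))) ^ n
      rw [ ← Real.rpow_natCast (3 : ℝ) n,
        ← Real.rpow_natCast ((3 : ℝ) ^ (-(t * τ))) n,
        ← Real.rpow_mul (by norm_num), ← Real.rpow_mul (by norm_num),
        ← Real.rpow_mul (by norm_num)]
      ring_nf
    rw [h1, h2, hy, mul_pow, pow_succ]
    ring
  -- the covers
  set C : ℕ → ℕ × ℕ → Set ℝ := fun M i =>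
    if i.2 < 2 ^ (M + i.1 + 1) then closedBall (endEnum (M + i.1) i.2) (R (M + i.1)) else ∅
    with hC
  set r : ℕ → ℝ≥0∞ := fun M => ENNReal.ofReal (2 * R M) with hr_def
  have hr : Filter.Tendsto r Filter.atTop (nhds 0) := by
    have h1 : Filter.Tendsto (fun M : ℕ => 2 * R M) Filter.atTop (nhds 0) := by
      have h3 : (3 : ℝ) ^ (-t) < 1 :=
        Real.rpow_lt_one_of_one_lt_of_neg (by norm_num) (by linarith)
      have := (tendsto_pow_atTop_nhds_zero_of_lt_one (by positivity) h3).const_mul (2 : ℝ)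
      simpa [hRgeom] using this
    have := ENNReal.tendsto_ofReal h1
    simpa [hr_def] using this
  have ht_diam : ∀ M : ℕ, ∀ i : ℕ × ℕ, EMetric.diam (C M i) ≤ r M := by
    rintro M ⟨j, k⟩
    by_cases hk : k < 2 ^ (M + j + 1)
    · simp only [hC, if_pos hk]
      rw [← Metric.emetric_closedBall (hR0 (M + j)).le]
      refine le_trans EMetric.diam_closedBall ?_
      show 2 * ENNReal.ofReal (R (M + j)) ≤ ENNReal.ofReal (2 * R M)
      rw [ENNReal.ofReal_mul (by norm_num)]
      simp only [ENNReal.ofReal_ofNat]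
      exact mul_le_mul_right (ENNReal.ofReal_le_ofReal (hRmono M (M + j) (Nat.le_add_right _ _))) _
    · simp [hC, hk, EMetric.diam]
  have hcov : ∀ M : ℕ, cantorFt t ⊆ ⋃ i, C M i := by
    intro M x hx
    obtain ⟨q, hq, p, hp, hd⟩ := hx.2 (3 ^ M - 1)
    have h1 : 1 ≤ 3 ^ M := Nat.one_le_pow _ _ (by norm_num)
    have hqM : 3 ^ M ≤ q := by omega
    set n := Nat.log 3 q with hn
    have hnM : M ≤ n := (Nat.le_log_iff_pow_le (by norm_num) (by omega)).2 hqM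
    have hqn : 3 ^ n ≤ q := Nat.pow_log_le_self 3 (by omega)
    have hdist : dist p x ≤ R n := by
      refine le_trans hd ?_
      exact Real.rpow_le_rpow_of_nonpos (by positivity) (by exact_mod_cast hqn) (by linarith)
    have hp' : p ∈ cantorEndpoints n := hp
    obtain ⟨k, hk, hek⟩ := endEnum_spec n p hp'
    refine Set.mem_iUnion.2 ⟨(n - M, k), ?_⟩
    have hMn : M + (n - M) = n := by omega
    simp only [hC, hMn, if_pos hk]
    rw [Metric.mem_closedBall, hek, dist_comm]
    exact hdist
  -- the sum bound
  have hsum : ∀ M : ℕ, (∑' i : ℕ × ℕ, EMetric.diam (C M i) ^ τ) ≤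
      ENNReal.ofReal ((2 * 2 ^ τ) * (1 - y)⁻¹ * y ^ M) := by
    intro M
    rw [ENNReal.tsum_prod']
    have hterm : ∀ j k : ℕ, EMetric.diam (C M (j, k)) ^ τ ≤
        if k < 2 ^ (M + j + 1) then ENNReal.ofReal ((2 * R (M + j)) ^ τ) else 0 := by
      intro j k
      by_cases hk : k < 2 ^ (M + j + 1)
      · simp only [hC, if_pos hk]
        have hdb : EMetric.diam (closedBall (endEnum (M + j) k) (R (M + j))) ≤
            ENNReal.ofReal (2 * R (M + j)) := by
          rw [← Metric.emetric_closedBall (hR0 (M + j)).le,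
            ENNReal.ofReal_mul (by norm_num)]
          simpa [EMetric.diam] using EMetric.diam_closedBall (x := endEnum (M + j) k)
            (r := ENNReal.ofReal (R (M + j)))
        calc EMetric.diam (closedBall (endEnum (M + j) k) (R (M + j))) ^ τ
            ≤ (ENNReal.ofReal (2 * R (M + j))) ^ τ :=
              ENNReal.rpow_le_rpow hdb hτ0.le
          _ = ENNReal.ofReal ((2 * R (M + j)) ^ τ) :=
              ENNReal.ofReal_rpow_of_pos (by positivity)
      · simp only [hC, if_neg hk, EMetric.diam, EMetric.diam_empty]
        rw [ENNReal.zero_rpow_of_pos hτ0]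
    calc (∑' j : ℕ, ∑' k : ℕ, EMetric.diam (C M (j, k)) ^ τ)
        ≤ ∑' j : ℕ, ∑' k : ℕ,
            (if k < 2 ^ (M + j + 1) then ENNReal.ofReal ((2 * R (M + j)) ^ τ) else 0) :=
          ENNReal.tsum_le_tsum fun j => ENNReal.tsum_le_tsum fun k => hterm j k
      _ = ∑' j : ℕ, (2 ^ (M + j + 1) : ℝ≥0∞) * ENNReal.ofReal ((2 * R (M + j)) ^ τ) := by
          refine tsum_congr fun j => ?_
          rw [tsum_eq_sum (s := Finset.range (2 ^ (M + j + 1)))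
            (fun k hk => if_neg (by simpa using hk))]
          rw [Finset.sum_ite_of_true (fun k hk => by simpa using hk), Finset.sum_const,
            Finset.card_range, nsmul_eq_mul]
          norm_cast
      _ = ∑' j : ℕ, ENNReal.ofReal ((2 * 2 ^ τ) * y ^ (M + j)) := by
          refine tsum_congr fun j => ?_
          rw [← halg (M + j), ENNReal.ofReal_mul (by positivity)]
          congr 1
          rw [ENNReal.ofReal_pow (by norm_num)]
          norm_num
      _ = ENNReal.ofReal (∑' j : ℕ, (2 * 2 ^ τ) * y ^ (M + j)) := by
          rw [ENNReal.ofReal_tsum_of_nonneg (fun j => by positivity) ?_]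
          · have heq : (fun j : ℕ => (2 * 2 ^ τ) * y ^ (M + j)) =
                fun j : ℕ => ((2 * 2 ^ τ) * y ^ M) * y ^ j := by
              funext j; rw [pow_add]; ring
            rw [heq]
            exact (summable_geometric_of_lt_one hy0 hy1).mul_left _
      _ ≤ ENNReal.ofReal ((2 * 2 ^ τ) * (1 - y)⁻¹ * y ^ M) := by
          refine ENNReal.ofReal_le_ofReal (le_of_eq ?_)
          have heq : (fun j : ℕ => (2 * 2 ^ τ) * y ^ (M + j)) =
              fun j : ℕ => ((2 * 2 ^ τ) * y ^ M) * y ^ j := by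
            funext j; rw [pow_add]; ring
          rw [heq, tsum_mul_left, tsum_geometric_of_lt_one hy0 hy1]
          ring
  have hb : Filter.Tendsto (fun M : ℕ => ENNReal.ofReal ((2 * 2 ^ τ) * (1 - y)⁻¹ * y ^ M))
      Filter.atTop (nhds 0) := by
    have h1 : Filter.Tendsto (fun M : ℕ => (2 * 2 ^ τ) * (1 - y)⁻¹ * y ^ M)
        Filter.atTop (nhds 0) := by
      have := (tendsto_pow_atTop_nhds_zero_of_lt_one hy0 hy1).const_mul ((2 * 2 ^ τ) * (1 - y)⁻¹)
      simpa [mul_comm] using this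
    have := ENNReal.tendsto_ofReal h1
    simpa using this
  have hmain := Measure.hausdorffMeasure_le_liminf_tsum τ (cantorFt t) r hr C
    (Filter.Eventually.of_forall ht_diam) (Filter.Eventually.of_forall hcov)
  refine le_antisymm ?_ zero_le
  calc μH[τ] (cantorFt t)
      ≤ Filter.liminf (fun M => ∑' i : ℕ × ℕ, EMetric.diam (C M i) ^ τ) Filter.atTop := hmain
    _ ≤ Filter.liminf (fun M : ℕ =>
          ENNReal.ofReal ((2 * 2 ^ τ) * (1 - y)⁻¹ * y ^ M)) Filter.atTop :=
        Filter.liminf_le_liminf (Filter.Eventually.of_forall hsum)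
    _ = 0 := hb.liminf_eq

theorem cantor_dimH_upper_bound (t : ℝ) (ht : 1 ≤ t) :
    (∀ τ : ℝ, Real.log 2 / Real.log 3 / t < τ → μH[τ] (cantorFt t) < ⊤) ∧
    dimH (cantorFt t) ≤ ENNReal.ofReal (Real.log 2 / Real.log 3 / t) := by
  have ht0 : (0 : ℝ) < t := lt_of_lt_of_le one_pos ht
  have hs0 : 0 < Real.log 2 / Real.log 3 :=
    div_pos (Real.log_pos (by norm_num)) (Real.log_pos (by norm_num))
  set s : ℝ := Real.log 2 / Real.log 3 / t with hs
  have hst0 : 0 < s := div_pos hs0 ht0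
  constructor
  · intro τ hτ
    rw [cantorFt_hausdorff_zero t τ ht hτ]
    simp
  · refine ENNReal.le_of_forall_pos_le_add fun ε hε _ => ?_
    have hcoe : ((s.toNNReal + ε : ℝ≥0) : ℝ) = s + ε := by
      rw [NNReal.coe_add, Real.coe_toNNReal _ hst0.le]
    have hzero : μH[((s.toNNReal + ε : ℝ≥0) : ℝ)] (cantorFt t) = 0 :=
      cantorFt_hausdorff_zero t _ ht (by rw [hcoe]; linarith [NNReal.coe_pos.2 hε])
    have hd := dimH_le_of_hausdorffMeasure_ne_top (s := cantorFt t)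
      (d := s.toNNReal + ε) (by rw [hzero]; exact ENNReal.zero_ne_top)
    refine le_trans hd ?_
    rw [ENNReal.ofReal]
    push_cast
    rfl
end

section
/- Let F₀ be the middle-third Cantor set, C the set of midpoints of the bounded complementary intervals of F₀, and F = F₀ ∪ C. Fix t > 1. There is a choice of maximal (1/q)-separated sets P(q) ⊆ C (for each q ≥ 1) such that the limsup set F_t = ⋂_N ⋃_{q>N} ⋃_{p∈P(q)} B(p, q^{-t}) ∩ F is contained in C; in particular F_t is countable and dim_H F_t = 0. -/
open Metric MeasureTheory
open Set

/-- The midpoints of the bounded complementary intervals (the removed open middle thirds)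
of the middle-third Cantor set. -/
def gapMidpoints : Set ℝ :=
  ⋃ n : ℕ, (fun l => l + (3 : ℝ) ^ (-(n : ℤ)) / 2) '' cantorLeftEnds n

/-- `F = F₀ ∪ C`: the Cantor set together with the gap midpoints. -/
def cantorWithMids : Set ℝ := cantorSet ∪ gapMidpoints

/-- The limsup set of points of `F` infinitely often `q^{-t}`-approximated by `P q`. -/
def limsupSetF (P : ℕ → Set ℝ) (t : ℝ) : Set ℝ :=
  {x ∈ cantorWithMids | ∀ N : ℕ, ∃ q > N, ∃ p ∈ P q, dist p x ≤ (q : ℝ) ^ (-t)}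


lemma pow3_eq (n : ℕ) : (3:ℝ) ^ (-(n:ℤ)) = ((3:ℝ) ^ n)⁻¹ := by
  rw [zpow_neg, zpow_natCast]

lemma pow3_pos (n : ℕ) : (0:ℝ) < ((3:ℝ) ^ n)⁻¹ := by positivity

lemma pow3_le_one (n : ℕ) : ((3:ℝ) ^ n)⁻¹ ≤ 1 := by
  rw [inv_le_one_iff₀]; right; exact one_le_pow₀ (by norm_num)

lemma pow3_succ (n : ℕ) : ((3:ℝ) ^ (n+1))⁻¹ = ((3:ℝ) ^ n)⁻¹ / 3 := by
  rw [pow_succ]; field_simp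

lemma cantorLeftEnds_bounds : ∀ n, ∀ l ∈ cantorLeftEnds n, 0 ≤ l ∧ l + ((3:ℝ) ^ n)⁻¹ ≤ 1 := by
  intro n
  induction n with
  | zero => rintro l hl; simp [cantorLeftEnds] at hl; subst hl; norm_num
  | succ n ih =>
    rintro l (⟨m, hm, rfl⟩ | ⟨m, hm, rfl⟩) <;> obtain ⟨h1, h2⟩ := ih m hm <;>
      rw [pow3_succ] <;> constructor <;> simp only [] <;> nlinarith [pow3_pos n]

lemma cantorLeftEnds_sep : ∀ n, ∀ l ∈ cantorLeftEnds n, ∀ l' ∈ cantorLeftEnds n,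
    l ≠ l' → 2 * ((3:ℝ) ^ n)⁻¹ ≤ |l - l'| := by
  intro n
  induction n with
  | zero =>
    rintro l hl l' hl' hne
    simp [cantorLeftEnds] at hl hl'; exact absurd (hl.trans hl'.symm) hne
  | succ n ih =>
    have key : ∀ a ∈ cantorLeftEnds n, ∀ b ∈ cantorLeftEnds n,
        2 * ((3:ℝ) ^ (n+1))⁻¹ ≤ |a / 3 - (2 + b) / 3| := by
      intro a ha b hb
      obtain ⟨ha1, ha2⟩ := cantorLeftEnds_bounds n a ha
      obtain ⟨hb1, hb2⟩ := cantorLeftEnds_bounds n b hb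
      rw [pow3_succ, abs_sub_comm, abs_of_nonneg (by nlinarith [pow3_pos n])]
      nlinarith [pow3_pos n, pow3_le_one n]
    rintro l (⟨m, hm, rfl⟩ | ⟨m, hm, rfl⟩) l' (⟨m', hm', rfl⟩ | ⟨m', hm', rfl⟩) hne
    · have : m ≠ m' := by intro h; exact hne (by rw [h])
      have := ih m hm m' hm' this
      rw [pow3_succ]
      rw [show m / 3 - m' / 3 = (m - m') / 3 by ring, abs_div]
      rw [abs_of_nonneg (by norm_num : (0:ℝ) ≤ 3)]
      linarith
    · exact key m hm m' hm' 
    · rw [abs_sub_comm]; exact key m' hm' m hm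
    · have : m ≠ m' := by intro h; exact hne (by rw [h])
      have := ih m hm m' hm' this
      rw [pow3_succ]
      rw [show (2+m) / 3 - (2+m') / 3 = (m - m') / 3 by ring, abs_div]
      rw [abs_of_nonneg (by norm_num : (0:ℝ) ≤ 3)]
      linarith

lemma preCantorSet_subset_iUnion (n : ℕ) :
    preCantorSet n ⊆ ⋃ l ∈ cantorLeftEnds n, Icc l (l + ((3:ℝ) ^ n)⁻¹) := by
  induction n with
  | zero =>
    intro x hx
    simp only [preCantorSet_zero] at hx
    refine mem_iUnion₂.mpr ⟨0, rfl, ?_⟩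
    simpa using hx
  | succ n ih =>
    rintro x (⟨y, hy, rfl⟩ | ⟨y, hy, rfl⟩) <;>
      obtain ⟨l, hle, hmem, hub⟩ := by simpa using ih hy
    · refine mem_iUnion₂.mpr ⟨l / 3, Or.inl ⟨l, hmem, rfl⟩, ?_, ?_⟩ <;>
        show _ ≤ _ <;> beta_reduce <;> (try rw [pow3_succ]) <;> linarith
    · refine mem_iUnion₂.mpr ⟨(2 + l) / 3, Or.inr ⟨l, hmem, rfl⟩, ?_, ?_⟩ <;>
        show _ ≤ _ <;> beta_reduce <;> (try rw [pow3_succ]) <;> linarith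

lemma cantorLeftEnds_mono : ∀ n, cantorLeftEnds n ⊆ cantorLeftEnds (n+1) := by
  intro n
  induction n with
  | zero =>
    rintro l hl
    have : l = 0 := hl
    subst this
    exact Or.inl ⟨0, rfl, by norm_num⟩
  | succ n ih => rintro l (⟨m, hm, rfl⟩ | ⟨m, hm, rfl⟩)
                 · exact Or.inl ⟨m, ih hm, rfl⟩
                 · exact Or.inr ⟨m, ih hm, rfl⟩

/-- nesting: every level-(n+1) interval sits inside a level-n interval -/
lemma cantorLeftEnds_nest : ∀ n, ∀ l' ∈ cantorLeftEnds (n+1),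
    ∃ l ∈ cantorLeftEnds n, l ≤ l' ∧ l' + ((3:ℝ) ^ (n+1))⁻¹ ≤ l + ((3:ℝ) ^ n)⁻¹ := by
  intro n
  induction n with
  | zero =>
    rintro l' (⟨m, hm, rfl⟩ | ⟨m, hm, rfl⟩) <;>
      simp [cantorLeftEnds] at hm <;> subst hm <;>
      exact ⟨0, rfl, by norm_num⟩
  | succ n ih =>
    rintro l' (⟨m, hm, rfl⟩ | ⟨m, hm, rfl⟩) <;> obtain ⟨l, hl, h1, h2⟩ := ih m hm
    · refine ⟨l / 3, Or.inl ⟨l, hl, rfl⟩, by linarith, ?_⟩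
      rw [pow3_succ, pow3_succ]; rw [pow3_succ] at h2; simp only []; linarith
    · refine ⟨(2 + l) / 3, Or.inr ⟨l, hl, rfl⟩, by linarith, ?_⟩
      rw [pow3_succ, pow3_succ]; rw [pow3_succ] at h2; simp only []; linarith

/-- iterated nesting -/
lemma cantorLeftEnds_nest' : ∀ n m, n ≤ m → ∀ l' ∈ cantorLeftEnds m,
    ∃ l ∈ cantorLeftEnds n, l ≤ l' ∧ l' + ((3:ℝ) ^ m)⁻¹ ≤ l + ((3:ℝ) ^ n)⁻¹ := by
  intro n m hnm
  induction m, hnm using Nat.le_induction with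
  | base => exact fun l' hl' => ⟨l', hl', le_refl _, le_refl _⟩
  | succ m hnm ih =>
    intro l' hl'
    obtain ⟨p, hp, hp1, hp2⟩ := cantorLeftEnds_nest m l' hl'
    obtain ⟨l, hl, h1, h2⟩ := ih p hp
    exact ⟨l, hl, h1.trans hp1, by linarith⟩

/-- Distance from a level-n center (gap midpoint) to any point of the Cantor set. -/
lemma gap_dist (n : ℕ) (l : ℝ) (hl : l ∈ cantorLeftEnds n) (x : ℝ) (hx : x ∈ cantorSet) :
    ((3:ℝ) ^ (n+1))⁻¹ / 2 ≤ |x - (l + ((3:ℝ) ^ n)⁻¹ / 2)| := by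
  set h : ℝ := ((3:ℝ) ^ (n+1))⁻¹ with hh
  have h3 : ((3:ℝ) ^ n)⁻¹ = 3 * h := by rw [hh, pow3_succ]; ring
  have hx' : x ∈ preCantorSet (n+1) := Set.mem_iInter.mp hx (n+1)
  obtain ⟨l', hl'le, hl'mem, hl'ub⟩ := by simpa using preCantorSet_subset_iUnion (n+1) hx'
  have hlmem : l ∈ cantorLeftEnds (n+1) := cantorLeftEnds_mono n hl
  have hcase : l' ≤ l ∨ l + 2 * h ≤ l' := by
    rcases eq_or_ne l' l with rfl | hne
    · exact Or.inl le_rfl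
    · have := cantorLeftEnds_sep (n+1) l' hl'mem l hlmem hne
      rcases le_or_gt l' l with h1 | h1
      · exact Or.inl h1
      · right
        rw [abs_of_pos (by linarith)] at this
        linarith
    
  have hpos := pow3_pos (n+1)
  rw [← hh] at hpos
  rcases hcase with hc | hc
  · have : x ≤ l + h := by linarith
    rw [abs_sub_comm, abs_of_nonneg (by rw [h3]; linarith)]
    rw [h3]; linarith
  · have : l + 2 * h ≤ x := le_trans hc hl'le
    rw [abs_of_nonneg (by rw [h3]; linarith)]
    rw [h3]; linarith

lemma cantorLeftEnds_countable (n : ℕ) : (cantorLeftEnds n).Countable := by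
  induction n with
  | zero => exact countable_singleton 0
  | succ n ih => exact (ih.image _).union (ih.image _)

/-- The level-`n` gap midpoints (centers of level-`n` basic intervals). -/
def midpt (n : ℕ) : Set ℝ := (fun l => l + (3 : ℝ) ^ (-(n : ℤ)) / 2) '' cantorLeftEnds n

/-- Gap midpoints of level at most `n`. -/
def Cn (n : ℕ) : Set ℝ := ⋃ m ∈ Iic n, midpt m

lemma gapMidpoints_eq : gapMidpoints = ⋃ n, midpt n := rfl

lemma Cn_subset_gapMidpoints (n : ℕ) : Cn n ⊆ gapMidpoints :=
  iUnion₂_subset fun m _ => subset_iUnion (fun k => midpt k) m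

lemma gapMidpoints_countable : gapMidpoints.Countable :=
  countable_iUnion fun n => (cantorLeftEnds_countable n).image _

lemma nq_ex (q : ℕ) : ∃ n, q ≤ 2 * 3 ^ n :=
  ⟨q, le_of_lt (lt_of_lt_of_le (Nat.lt_pow_self (n := q) (a := 3) (by norm_num))
    (Nat.le_mul_of_pos_left _ (by norm_num)))⟩

/-- The chosen level for parameter `q`. -/
def nq (q : ℕ) : ℕ := Nat.find (nq_ex q)

lemma nq_spec (q : ℕ) : q ≤ 2 * 3 ^ (nq q) := Nat.find_spec (nq_ex q)

lemma nq_lower_nat (q : ℕ) (hq : 1 ≤ q) : 3 ^ (nq q) ≤ 2 * q := by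
  rcases Nat.eq_zero_or_pos (nq q) with h | h
  · rw [h]; omega
  · have hmin := Nat.find_min (nq_ex q) (show nq q - 1 < nq q from Nat.sub_lt h one_pos)
    push_neg at hmin
    have h3 : nq q = (nq q - 1) + 1 := by omega
    rw [h3, pow_succ]
    omega

lemma nq_upper_real (q : ℕ) (hq : 1 ≤ q) : ((3:ℝ) ^ (nq q))⁻¹ / 2 ≤ 1 / q := by
  have h1 : (q:ℝ) ≤ 2 * 3 ^ (nq q) := by exact_mod_cast nq_spec q
  have h2 : (0:ℝ) < q := by exact_mod_cast hq
  have h3 : (0:ℝ) < 3 ^ (nq q) := by positivity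
  rw [div_le_div_iff₀ (by positivity) h2, inv_mul_le_iff₀ h3]
  linarith

lemma nq_lower_real (q : ℕ) : 1 / (q:ℝ) ≤ 2 * ((3:ℝ) ^ (nq q))⁻¹ := by
  rcases Nat.eq_zero_or_pos q with rfl | hq
  · simp

  · have h1 : (3:ℝ) ^ (nq q) ≤ 2 * q := by exact_mod_cast nq_lower_nat q hq
    have h2 : (0:ℝ) < q := by exact_mod_cast hq
    have h3 : (0:ℝ) < (3:ℝ) ^ (nq q) := by positivity
    rw [div_le_iff₀ h2]
    calc (1:ℝ) = 3 ^ (nq q) * ((3:ℝ) ^ (nq q))⁻¹ := (mul_inv_cancel₀ (ne_of_gt h3)).symm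
    _ ≤ (2 * q) * ((3:ℝ) ^ (nq q))⁻¹ :=
        mul_le_mul_of_nonneg_right h1 (inv_nonneg.mpr h3.le)
    _ = 2 * ((3:ℝ) ^ (nq q))⁻¹ * q := by ring

/-- Distance from any point of `Cn n` to any point of the Cantor set. -/
lemma Cn_dist (n : ℕ) (p : ℝ) (hp : p ∈ Cn n) (x : ℝ) (hx : x ∈ cantorSet) :
    ((3:ℝ) ^ (n+1))⁻¹ / 2 ≤ |x - p| := by
  obtain ⟨m, hm, hpm⟩ := mem_iUnion₂.mp hp
  obtain ⟨l, hl, rfl⟩ := hpm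
  rw [mem_Iic] at hm
  have h1 := gap_dist m l hl x hx
  rw [pow3_eq]
  refine le_trans ?_ h1
  have : (3:ℝ) ^ (m+1) ≤ 3 ^ (n+1) := pow_le_pow_right₀ (by norm_num) (by omega)
  have := inv_anti₀ (by positivity) this
  linarith

/-- Existence of a good maximal separated set. -/
lemma exists_P (q : ℕ) : ∃ S : Set ℝ, midpt (nq q) ⊆ S ∧ S ⊆ Cn (nq q) ∧
    (∀ p₁ ∈ S, ∀ p₂ ∈ S, p₁ ≠ p₂ → 1 / (q:ℝ) ≤ dist p₁ p₂) ∧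
    (∀ c ∈ Cn (nq q), ∃ p ∈ S, dist c p ≤ 1 / (q:ℝ)) := by
  set n := nq q with hn
  set 𝒮 : Set (Set ℝ) := {S | midpt n ⊆ S ∧ S ⊆ Cn n ∧
    ∀ p₁ ∈ S, ∀ p₂ ∈ S, p₁ ≠ p₂ → 1 / (q:ℝ) ≤ dist p₁ p₂} with h𝒮
  have hforced : midpt n ∈ 𝒮 := by
    refine ⟨le_refl _, fun p hp => mem_iUnion₂.mpr ⟨n, self_mem_Iic, hp⟩, ?_⟩
    rintro p₁ ⟨l₁, hl₁, rfl⟩ p₂ ⟨l₂, hl₂, rfl⟩ hne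
    have hlne : l₁ ≠ l₂ := fun h => hne (by rw [h])
    have hsep := cantorLeftEnds_sep n l₁ hl₁ l₂ hl₂ hlne
    have := nq_lower_real q
    rw [Real.dist_eq]
    calc 1 / (q:ℝ) ≤ 2 * ((3:ℝ) ^ n)⁻¹ := this
    _ ≤ |l₁ - l₂| := hsep
    _ = _ := by congr 1; ring
  obtain ⟨S, hfS, hS𝒮, hSmax⟩ := zorn_subset_nonempty 𝒮 (fun c hc hchain hne => by
    refine ⟨⋃₀ c, ⟨?_, ?_, ?_⟩, fun s hs => subset_sUnion_of_mem hs⟩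
    · obtain ⟨s, hs⟩ := hne
      exact subset_trans (hc hs).1 (subset_sUnion_of_mem hs)
    · exact sUnion_subset fun s hs => (hc hs).2.1
    · rintro p₁ hp₁ p₂ hp₂ hne'
      obtain ⟨s₁, hs₁, hp₁'⟩ := hp₁
      obtain ⟨s₂, hs₂, hp₂'⟩ := hp₂
      rcases hchain.total hs₁ hs₂ with h | h
      · exact (hc hs₂).2.2 p₁ (h hp₁') p₂ hp₂' hne'
      · exact (hc hs₁).2.2 p₁ hp₁' p₂ (h hp₂') hne') (midpt n) hforced
  obtain ⟨hf, hsub, hsep⟩ := hS𝒮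
  refine ⟨S, hf, hsub, hsep, ?_⟩
  intro c hc
  by_contra hcon
  push_neg at hcon
  have hcS : insert c S ∈ 𝒮 := by
    refine ⟨hf.trans (subset_insert _ _), insert_subset hc hsub, ?_⟩
    rintro p₁ (rfl | hp₁) p₂ (rfl | hp₂) hne
    · exact absurd rfl hne
    · exact le_of_lt (hcon p₂ hp₂)
    · rw [dist_comm]; exact le_of_lt (hcon p₁ hp₁)
    · exact hsep p₁ hp₁ p₂ hp₂ hne
  have hins : insert c S ⊆ S := hSmax hcS (subset_insert _ _)
  have hcmem : c ∈ S := hins (mem_insert _ _)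
  have hlt := hcon c hcmem
  rw [dist_self] at hlt
  have h0 : (0:ℝ) ≤ 1 / (q:ℝ) := by positivity
  linarith

theorem exists_rationals_in_gaps (t : ℝ) (ht : 1 < t) :
    ∃ P : ℕ → Set ℝ,
      (∀ q : ℕ, 1 ≤ q → P q ⊆ gapMidpoints ∧
        (∀ p₁ ∈ P q, ∀ p₂ ∈ P q, p₁ ≠ p₂ → 1 / (q : ℝ) ≤ dist p₁ p₂) ∧
        (∀ x ∈ cantorWithMids, ∃ p ∈ P q, dist x p ≤ 1 / (q : ℝ))) ∧
      limsupSetF P t ⊆ gapMidpoints ∧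
      (limsupSetF P t).Countable ∧
      dimH (limsupSetF P t) = 0 := by
  classical
  set P : ℕ → Set ℝ := fun q => (exists_P q).choose with hP
  have hPf : ∀ q, midpt (nq q) ⊆ P q := fun q => (exists_P q).choose_spec.1
  have hPsub : ∀ q, P q ⊆ Cn (nq q) := fun q => (exists_P q).choose_spec.2.1
  have hPsep : ∀ q, ∀ p₁ ∈ P q, ∀ p₂ ∈ P q, p₁ ≠ p₂ → 1 / (q:ℝ) ≤ dist p₁ p₂ :=
    fun q => (exists_P q).choose_spec.2.2.1
  have hPcov : ∀ q, ∀ c ∈ Cn (nq q), ∃ p ∈ P q, dist c p ≤ 1 / (q:ℝ) :=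
    fun q => (exists_P q).choose_spec.2.2.2
  -- the limsup set is contained in the gap midpoints
  have hlim : limsupSetF P t ⊆ gapMidpoints := by
    rintro x ⟨hxF, hxq⟩
    rcases hxF with hxC | hxG
    · -- x in the Cantor set: contradiction
      exfalso
      set B : ℝ := (13:ℝ) ^ ((t-1)⁻¹) with hB
      have hBpos : 0 < B := Real.rpow_pos_of_pos (by norm_num) _
      obtain ⟨q, hqN, p, hpP, hdist⟩ := hxq ⌈B⌉₊
      have hq1 : 1 ≤ q := by omega
      have hqR : (0:ℝ) < q := by exact_mod_cast hq1
      have ht' : (0:ℝ) < t - 1 := by linarith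
      -- q^(t-1) ≥ 13
      have hBq : B ≤ (q:ℝ) := le_trans (Nat.le_ceil B) (by exact_mod_cast hqN.le)
      have h13 : (13:ℝ) ≤ (q:ℝ) ^ (t-1) := by
        have := Real.rpow_le_rpow hBpos.le hBq ht'.le
        rwa [hB, ← Real.rpow_mul (by norm_num), inv_mul_cancel₀ (ne_of_gt ht'),
          Real.rpow_one] at this
      -- q^(-t) ≤ 1/(13 q)
      have hqt : (q:ℝ) ^ (-t) ≤ 1 / (13 * q) := by
        have hq_t : (q:ℝ) ^ t = q * (q:ℝ) ^ (t-1) := by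
          rw [show t = 1 + (t-1) by ring, Real.rpow_add hqR, Real.rpow_one]
          ring_nf
        have h13q : 13 * (q:ℝ) ≤ (q:ℝ) ^ t := by
          rw [hq_t]
          nlinarith
        rw [Real.rpow_neg hqR.le, one_div]
        exact inv_anti₀ (by positivity) h13q
      -- distance from p to x is at least 1/(12 q)
      have hdistlow : 1 / (12 * (q:ℝ)) ≤ dist p x := by
        have h1 := Cn_dist (nq q) p (hPsub q hpP) x hxC
        have h2 : (3:ℝ) ^ (nq q) ≤ 2 * q := by exact_mod_cast nq_lower_nat q hq1
        have h3 : (0:ℝ) < (3:ℝ) ^ (nq q) := by positivity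
        have h4 : ((3:ℝ) ^ (nq q + 1))⁻¹ = ((3:ℝ) ^ (nq q))⁻¹ / 3 := by
          rw [pow_succ]; field_simp
        have h5 : (1:ℝ) ≤ ((3:ℝ) ^ (nq q))⁻¹ * (2 * q) := by
          have := mul_le_mul_of_nonneg_left h2 (inv_nonneg.mpr h3.le)
          rwa [inv_mul_cancel₀ (ne_of_gt h3)] at this
        rw [dist_comm, Real.dist_eq]
        refine le_trans ?_ h1
        rw [h4, div_le_iff₀ (by positivity : (0:ℝ) < 12 * q)]
        calc (1:ℝ) ≤ ((3:ℝ) ^ (nq q))⁻¹ * (2 * q) := h5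
        _ = ((3:ℝ) ^ (nq q))⁻¹ / 3 / 2 * (12 * q) := by ring
      have : 1 / (13 * (q:ℝ)) < 1 / (12 * q) := by
        apply div_lt_div_of_pos_left one_pos (by positivity)
        nlinarith
      linarith [hdist.trans hqt]
    · exact hxG
  refine ⟨P, ?_, hlim, gapMidpoints_countable.mono hlim, dimH_countable (gapMidpoints_countable.mono hlim)⟩
  intro q hq
  refine ⟨(hPsub q).trans (Cn_subset_gapMidpoints _), hPsep q, ?_⟩
  intro x hx
  rcases hx with hxC | hxG
  · -- Cantor set point: near a forced center
    have hx' : x ∈ preCantorSet (nq q) := Set.mem_iInter.mp hxC (nq q)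
    obtain ⟨l, hle, hmem, hub⟩ := by simpa using preCantorSet_subset_iUnion (nq q) hx'
    refine ⟨l + (3:ℝ) ^ (-(nq q : ℤ)) / 2, hPf q ⟨l, hmem, rfl⟩, ?_⟩
    rw [Real.dist_eq, pow3_eq]
    have := nq_upper_real q hq
    rw [abs_le]
    constructor <;> nlinarith [pow3_pos (nq q)]
  · -- gap midpoint
    obtain ⟨m, hm⟩ := mem_iUnion.mp hxG
    obtain ⟨l', hl', rfl⟩ := hm
    rcases le_total m (nq q) with hc | hc
    · -- low level: in Cn, use maximality covering
      exact hPcov q _ (mem_iUnion₂.mpr ⟨m, mem_Iic.mpr hc, ⟨l', hl', rfl⟩⟩)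
    · -- high level: inside a level-(nq q) interval
      obtain ⟨l, hl, h1, h2⟩ := cantorLeftEnds_nest' (nq q) m hc l' hl'
      refine ⟨l + (3:ℝ) ^ (-(nq q : ℤ)) / 2, hPf q ⟨l, hl, rfl⟩, ?_⟩
      rw [Real.dist_eq, pow3_eq, pow3_eq]
      have := nq_upper_real q hq
      rw [abs_le]
      constructor <;> nlinarith [pow3_pos (nq q), pow3_pos m]
end

section
/- Let F be a compact s-Ahlfors–David regular metric space with s > 0 and P(q) maximal (1/q)-separated sets with Dirichlet exponent d(P). Then d(P) ≤ 1 + 1/s. -/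
open Metric MeasureTheory
open scoped ENNReal

/-- The limsup set `F_t` of points infinitely often `q^{-t}`-approximated by `P q`. -/
def limsupSet {X : Type*} [MetricSpace X] (P : ℕ → Set X) (t : ℝ) : Set X :=
  {x : X | ∀ N : ℕ, ∃ q > N, ∃ p ∈ P q, dist p x ≤ (q : ℝ) ^ (-t)}

/-- The Dirichlet exponent `d(P)`: the supremum of exponents `d` such that `F_d`
contains a ball up to `H^s`-measure zero. -/
noncomputable def dirichletExp {X : Type*} [MetricSpace X] [MeasurableSpace X] [BorelSpace X]
    (s : ℝ) (P : ℕ → Set X) : ℝ :=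
  sSup {d : ℝ | ∃ (x : X) (r : ℝ), 0 < r ∧ μH[s] (closedBall x r \ limsupSet P d) = 0}

theorem dirichletExp_le
    {X : Type*} [MetricSpace X] [CompactSpace X] [Nonempty X]
    [MeasurableSpace X] [BorelSpace X]
    (s : ℝ) (hs : 0 < s) (Creg : ℝ) (hCreg : 0 < Creg)
    (hreg : ∀ (x : X) (r : ℝ), 0 < r → r < 1 →
      ENNReal.ofReal (r ^ s / Creg) ≤ μH[s] (closedBall x r) ∧
      μH[s] (closedBall x r) ≤ ENNReal.ofReal (Creg * r ^ s))
    (P : ℕ → Set X)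
    (hsep : ∀ q : ℕ, 0 < q → ∀ p₁ ∈ P q, ∀ p₂ ∈ P q, p₁ ≠ p₂ → 1 / (q : ℝ) ≤ dist p₁ p₂)
    (hmax : ∀ q : ℕ, 0 < q → ∀ x : X, ∃ p ∈ P q, dist x p ≤ 1 / (q : ℝ)) :
    dirichletExp s P ≤ 1 + 1 / s := by
  clear hmax
  -- total Hausdorff measure is finite
  set M : ℝ≥0∞ := μH[s] (Set.univ : Set X) with hMdef
  have hXfin : M ≠ ⊤ := by
    obtain ⟨t, ht⟩ := isCompact_univ.elim_finite_subcover
      (fun x : X => ball x (1/2)) (fun x => isOpen_ball)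
      (fun x _ => Set.mem_iUnion.2 ⟨x, mem_ball_self (by norm_num)⟩)
    have hle : M ≤ ∑ x ∈ t, ENNReal.ofReal (Creg * (1/2 : ℝ) ^ s) := by
      refine le_trans (measure_mono ht) (le_trans (measure_biUnion_finset_le t _) ?_)
      refine Finset.sum_le_sum fun x _ => ?_
      exact le_trans (measure_mono ball_subset_closedBall)
        (hreg x (1/2) (by norm_num) (by norm_num)).2
    exact ne_top_of_le_ne_top
      (ENNReal.sum_lt_top.2 fun a _ => ENNReal.ofReal_lt_top).ne hle
  -- cardinality bound for separated subsets
  have cardb : ∀ q : ℕ, 1 ≤ q → ∀ T : Finset X, ↑T ⊆ P q →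
      (T.card : ℝ) ≤ M.toReal * Creg * (3 * (q : ℝ)) ^ s := by
    intro q hq T hT
    have hq0 : (0 : ℝ) < q := by exact_mod_cast hq
    have hrad : (0 : ℝ) < 1 / (3 * q) := by positivity
    have hrad1 : 1 / (3 * (q : ℝ)) < 1 := by
      rw [div_lt_one (by positivity)]
      have : (1 : ℝ) ≤ q := by exact_mod_cast hq
      linarith
    have hdisj : (↑T : Set X).PairwiseDisjoint
        (fun p => closedBall p (1 / (3 * (q : ℝ)))) := by
      intro p₁ hp₁ p₂ hp₂ hne
      apply closedBall_disjoint_closedBall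
      have hd := hsep q (by omega) p₁ (hT hp₁) p₂ (hT hp₂) hne
      have h1 : 1 / (3 * (q : ℝ)) + 1 / (3 * q) < 1 / q := by
        rw [← add_div, div_lt_div_iff₀ (by positivity) hq0]
        nlinarith
      linarith
    have heq : μH[s] (⋃ p ∈ T, closedBall p (1 / (3 * (q : ℝ))))
        = ∑ p ∈ T, μH[s] (closedBall p (1 / (3 * q))) :=
      measure_biUnion_finset hdisj (fun p _ => measurableSet_closedBall)
    have hsum : (T.card : ℝ≥0∞) * ENNReal.ofReal ((1 / (3 * (q : ℝ))) ^ s / Creg) ≤ M := by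
      calc (T.card : ℝ≥0∞) * ENNReal.ofReal ((1 / (3 * (q : ℝ))) ^ s / Creg)
          = ∑ _p ∈ T, ENNReal.ofReal ((1 / (3 * (q : ℝ))) ^ s / Creg) := by
            rw [Finset.sum_const, nsmul_eq_mul]
        _ ≤ ∑ p ∈ T, μH[s] (closedBall p (1 / (3 * q))) :=
            Finset.sum_le_sum fun p _ => (hreg p _ hrad hrad1).1
        _ = μH[s] (⋃ p ∈ T, closedBall p (1 / (3 * (q : ℝ)))) := heq.symm
        _ ≤ M := measure_mono (Set.subset_univ _)
    have htr := ENNReal.toReal_mono hXfin hsum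
    rw [ENNReal.toReal_mul, ENNReal.toReal_natCast,
      ENNReal.toReal_ofReal (by positivity)] at htr
    have hc : (0 : ℝ) < (1 / (3 * (q : ℝ))) ^ s / Creg := by positivity
    rw [← le_div_iff₀ hc] at htr
    refine le_trans htr (le_of_eq ?_)
    have hxA : ((1 : ℝ) / (3 * q)) ^ s = ((3 * (q : ℝ)) ^ s)⁻¹ := by
      rw [one_div, Real.inv_rpow (by positivity)]
    rw [hxA]
    have hA : (0 : ℝ) < (3 * (q : ℝ)) ^ s := Real.rpow_pos_of_pos (by positivity) _
    field_simp
  -- separated sets are finite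
  have hfin : ∀ q : ℕ, 1 ≤ q → (P q).Finite := by
    intro q hq
    by_contra hinf
    obtain ⟨T, hT, hcard⟩ := Set.Infinite.exists_subset_card_eq hinf
      (⌈M.toReal * Creg * (3 * (q : ℝ)) ^ s⌉₊ + 1)
    have h1 := cardb q hq T hT
    rw [hcard] at h1
    have h2 : M.toReal * Creg * (3 * (q : ℝ)) ^ s ≤ ⌈M.toReal * Creg * (3 * (q : ℝ)) ^ s⌉₊ :=
      Nat.le_ceil _
    push_cast at h1
    linarith
  -- main argument
  refine Real.sSup_le ?_ (by positivity)
  rintro d ⟨x, r, hr, h0⟩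
  by_contra hd
  push_neg at hd
  have hd0 : 0 < d := lt_trans (by positivity) hd
  have hds : s + 1 < d * s := by
    have h1 : (1 + 1/s) * s = s + 1 := by field_simp
    nlinarith
  set F := limsupSet P d with hF
  set K : ℝ := M.toReal * Creg * 3 ^ s * Creg with hK
  have hK0 : 0 ≤ K := by positivity
  -- measure bound on the union at level q
  have hU : ∀ q : ℕ, 2 ≤ q →
      μH[s] (⋃ p ∈ P q, closedBall p ((q : ℝ) ^ (-d)))
        ≤ ENNReal.ofReal (K * (q : ℝ) ^ (s - d * s)) := by
    intro q hq
    have hq0 : (0 : ℝ) < q := by exact_mod_cast (by omega : 0 < q)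
    have hq1 : (1 : ℝ) < q := by exact_mod_cast (by omega : 1 < q)
    have hfq := hfin q (by omega)
    have hr0 : (0 : ℝ) < (q : ℝ) ^ (-d) := Real.rpow_pos_of_pos hq0 _
    have hr1 : (q : ℝ) ^ (-d) < 1 :=
      Real.rpow_lt_one_of_one_lt_of_neg hq1 (by linarith)
    have hUeq : (⋃ p ∈ P q, closedBall p ((q : ℝ) ^ (-d)))
        = ⋃ p ∈ hfq.toFinset, closedBall p ((q : ℝ) ^ (-d)) := by simp
    rw [hUeq]
    calc μH[s] (⋃ p ∈ hfq.toFinset, closedBall p ((q : ℝ) ^ (-d)))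
        ≤ ∑ p ∈ hfq.toFinset, μH[s] (closedBall p ((q : ℝ) ^ (-d))) :=
          measure_biUnion_finset_le _ _
      _ ≤ ∑ _p ∈ hfq.toFinset, ENNReal.ofReal (Creg * ((q : ℝ) ^ (-d)) ^ s) :=
          Finset.sum_le_sum fun p _ => (hreg p _ hr0 hr1).2
      _ = (hfq.toFinset.card : ℝ≥0∞) * ENNReal.ofReal (Creg * ((q : ℝ) ^ (-d)) ^ s) := by
          rw [Finset.sum_const, nsmul_eq_mul]
      _ ≤ ENNReal.ofReal (M.toReal * Creg * (3 * (q : ℝ)) ^ s)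
            * ENNReal.ofReal (Creg * ((q : ℝ) ^ (-d)) ^ s) := by
          gcongr
          rw [← ENNReal.ofReal_natCast]
          exact ENNReal.ofReal_le_ofReal (cardb q (by omega) hfq.toFinset (by simp))
      _ = ENNReal.ofReal (K * (q : ℝ) ^ (s - d * s)) := by
          rw [← ENNReal.ofReal_mul (by positivity)]
          congr 1
          rw [Real.mul_rpow (by norm_num : (0:ℝ) ≤ 3) hq0.le,
            ← Real.rpow_mul hq0.le,
            show s - d * s = s + (-d) * s by ring,
            Real.rpow_add hq0, hK]
          ring
  -- the limsup set is contained in tails of the union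
  have hsubset : ∀ N : ℕ, F ⊆
      ⋃ k : ℕ, ⋃ p ∈ P (k + N + 2), closedBall p (((k + N + 2 : ℕ) : ℝ) ^ (-d)) := by
    intro N y hy
    obtain ⟨q, hqN, p, hp, hdist⟩ := hy (N + 1)
    refine Set.mem_iUnion.2 ⟨q - N - 2, ?_⟩
    have hqe : q - N - 2 + N + 2 = q := by omega
    rw [hqe]
    exact Set.mem_biUnion hp (by rwa [mem_closedBall, dist_comm])
  -- summability
  set g : ℕ → ℝ≥0∞ := fun q => ENNReal.ofReal (K * (q : ℝ) ^ (s - d * s)) with hg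
  have hgsum : ∑' q, g q ≠ ⊤ := by
    have hexp : s - d * s < -1 := by linarith
    have hKs : Summable (fun q : ℕ => K * (q : ℝ) ^ (s - d * s)) :=
      (Real.summable_nat_rpow.mpr hexp).mul_left K
    rw [hg, ← ENNReal.ofReal_tsum_of_nonneg
      (fun q => mul_nonneg hK0 (Real.rpow_nonneg (Nat.cast_nonneg q) _)) hKs]
    exact ENNReal.ofReal_ne_top
  have hμF : ∀ N : ℕ, μH[s] F ≤ ∑' k, g (k + (N + 2)) := by
    intro N
    calc μH[s] F
        ≤ μH[s] (⋃ k : ℕ, ⋃ p ∈ P (k + N + 2),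
            closedBall p (((k + N + 2 : ℕ) : ℝ) ^ (-d))) := measure_mono (hsubset N)
      _ ≤ ∑' k : ℕ, μH[s] (⋃ p ∈ P (k + N + 2),
            closedBall p (((k + N + 2 : ℕ) : ℝ) ^ (-d))) := measure_iUnion_le _
      _ ≤ ∑' k : ℕ, g (k + (N + 2)) := by
          refine ENNReal.tsum_le_tsum fun k => ?_
          have := hU (k + N + 2) (by omega)
          rwa [show k + N + 2 = k + (N + 2) from by omega] at this
  have hF0 : μH[s] F = 0 := by
    have htend := ENNReal.tendsto_sum_nat_add g hgsum
    have hle : μH[s] F ≤ 0 := by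
      refine ge_of_tendsto htend ?_
      filter_upwards [Filter.eventually_ge_atTop 2] with N hN
      have := hμF (N - 2)
      rwa [show N - 2 + 2 = N from by omega] at this
    exact le_antisymm hle zero_le
  -- the ball has positive measure
  have hposB : 0 < μH[s] (closedBall x r) := by
    have hr' : 0 < min r (1/2) := lt_min hr (by norm_num)
    have h1 : min r (1/2) < 1 := lt_of_le_of_lt (min_le_right _ _) (by norm_num)
    calc (0 : ℝ≥0∞) < ENNReal.ofReal ((min r (1/2)) ^ s / Creg) :=
          ENNReal.ofReal_pos.2 (by positivity)
      _ ≤ μH[s] (closedBall x (min r (1/2))) := (hreg x _ hr' h1).1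
      _ ≤ μH[s] (closedBall x r) :=
          measure_mono (closedBall_subset_closedBall (min_le_left _ _))
  have hzero : μH[s] (closedBall x r) ≤ 0 := by
    calc μH[s] (closedBall x r)
        ≤ μH[s] (closedBall x r \ F) + μH[s] F := by
          refine le_trans (measure_mono ?_) (measure_union_le _ _)
          intro y hy
          by_cases h : y ∈ F
          · exact Or.inr h
          · exact Or.inl ⟨hy, h⟩
      _ = 0 := by rw [h0, hF0, add_zero]
  exact hposB.ne' (le_antisymm hzero zero_le)
end
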